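/- arXiv:0807.2338 — 8 statements merged into one kernel-verified Lean document; each statement's English description precedes it below -/
import Mathlib

section
/- Let C ∈ ℂ^{n×m}, let Ω ∈ ℂ^{m×m} be Hermitian, and set A = -(1/2)C†C - iΩ. For any ω ∈ ℝ, if the matrix (iωI_m - A) is invertible, then the transfer matrix Ξ(iω) = I_n - C (iωI_m - A)^{-1} C† is unitary. -/
/-!
With `M = iω - A`, the hypotheses give `M + Mᴴ = CᴴC`. Writing `X = C M⁻¹ Cᴴ`, this yields
`X Xᴴ = C M⁻¹ (M + Mᴴ) Mᴴ⁻¹ Cᴴ = C (Mᴴ⁻¹ + M⁻¹) Cᴴ = Xᴴ + X`, and symmetrically `Xᴴ X = X + Xᴴ`;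
these two identities say exactly that `1 - X` is unitary.
-/

open Matrix

theorem one_sub_mem_unitary {R : Type*} [Ring R] [StarRing R] {X : R}
    (h₁ : X * star X = X + star X) (h₂ : star X * X = X + star X) : 1 - X ∈ unitary R := by
  refine Unitary.mem_iff.mpr ⟨?_, ?_⟩
  · rw [star_sub, star_one, sub_mul, mul_sub, mul_sub, h₂]
    noncomm_ring
  · rw [star_sub, star_one, sub_mul, mul_sub, mul_sub, h₁]
    noncomm_ring

namespace Matrix

variable {ι κ α : Type*} [CommRing α] [StarRing α]

-- No invertibility needed: `M` and `Mᴴ` are singular together, and then both sides are `0`.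
theorem nonsing_inv_add_nonsing_inv_conjTranspose [Fintype κ] [DecidableEq κ]
    (M : Matrix κ κ α) :
    M⁻¹ + Mᴴ⁻¹ = M⁻¹ * (M + Mᴴ) * Mᴴ⁻¹ := by
  simpa only [nonsing_inv_eq_ringInverse] using
    Ring.inverse_add_inverse (isUnit_conjTranspose M).symm

theorem one_sub_mul_nonsing_inv_mul_conjTranspose_mem_unitary [Fintype ι] [DecidableEq ι]
    [Fintype κ] [DecidableEq κ]
    {M : Matrix κ κ α} {C : Matrix ι κ α} (hM : M + Mᴴ = Cᴴ * C) :
    1 - C * M⁻¹ * Cᴴ ∈ unitary (Matrix ι ι α) := by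
  have hstar : star (C * M⁻¹ * Cᴴ) = C * Mᴴ⁻¹ * Cᴴ := by
    rw [star_eq_conjTranspose, conjTranspose_mul, conjTranspose_mul, conjTranspose_conjTranspose,
      conjTranspose_nonsing_inv, Matrix.mul_assoc]
  have sandwich (N : Matrix κ κ α) (hN : N + Nᴴ = Cᴴ * C) :
      C * N⁻¹ * Cᴴ * (C * Nᴴ⁻¹ * Cᴴ) = C * N⁻¹ * Cᴴ + C * Nᴴ⁻¹ * Cᴴ := by
    calc C * N⁻¹ * Cᴴ * (C * Nᴴ⁻¹ * Cᴴ) = C * (N⁻¹ * (Cᴴ * C) * Nᴴ⁻¹) * Cᴴ := by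
          simp only [Matrix.mul_assoc]
      _ = C * (N⁻¹ + Nᴴ⁻¹) * Cᴴ := by rw [← hN, nonsing_inv_add_nonsing_inv_conjTranspose]
      _ = C * N⁻¹ * Cᴴ + C * Nᴴ⁻¹ * Cᴴ := by rw [Matrix.mul_add, Matrix.add_mul]
  have hM' : Mᴴ + Mᴴᴴ = Cᴴ * C := by rw [conjTranspose_conjTranspose, add_comm, hM]
  apply one_sub_mem_unitary
  · rw [hstar, sandwich M hM]
  · rw [hstar, add_comm]
    simpa only [conjTranspose_conjTranspose] using sandwich Mᴴ hM'

theorem smul_one_sub_add_conjTranspose [DecidableEq κ] {z : α} (hz : star z = -z)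
    (A : Matrix κ κ α) :
    z • (1 : Matrix κ κ α) - A + (z • 1 - A)ᴴ = -(A + Aᴴ) := by
  rw [conjTranspose_sub, conjTranspose_smul, conjTranspose_one, hz, neg_smul]
  abel

theorem neg_half_smul_sub_I_smul_add_conjTranspose [Fintype ι] (C : Matrix ι κ ℂ)
    {Ω : Matrix κ κ ℂ} (hΩ : Ωᴴ = Ω) :
    -((1 / 2 : ℂ) • (Cᴴ * C)) - Complex.I • Ω + (-((1 / 2 : ℂ) • (Cᴴ * C)) - Complex.I • Ω)ᴴ =
      -(Cᴴ * C) := by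
  simp only [conjTranspose_sub, conjTranspose_neg, conjTranspose_smul, conjTranspose_mul,
    conjTranspose_conjTranspose, hΩ, Complex.star_def, Complex.conj_I, map_div₀, map_one,
    map_ofNat]
  module

end Matrix

theorem transfer_function_unitary_S_eq_one_general {n m : ℕ}
    (C : Matrix (Fin n) (Fin m) ℂ) (Ω : Matrix (Fin m) (Fin m) ℂ) (hΩ : Ωᴴ = Ω)
    (A : Matrix (Fin m) (Fin m) ℂ)
    (hA : A = -((1 / 2 : ℂ) • (Cᴴ * C)) - Complex.I • Ω)
    (ω : ℝ) :
    ((1 : Matrix (Fin n) (Fin n) ℂ) -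
        C * ((Complex.I * (ω : ℂ)) • (1 : Matrix (Fin m) (Fin m) ℂ) - A)⁻¹ * Cᴴ) *
      ((1 : Matrix (Fin n) (Fin n) ℂ) -
        C * ((Complex.I * (ω : ℂ)) • (1 : Matrix (Fin m) (Fin m) ℂ) - A)⁻¹ * Cᴴ)ᴴ = 1 ∧
    ((1 : Matrix (Fin n) (Fin n) ℂ) -
        C * ((Complex.I * (ω : ℂ)) • (1 : Matrix (Fin m) (Fin m) ℂ) - A)⁻¹ * Cᴴ)ᴴ *
      ((1 : Matrix (Fin n) (Fin n) ℂ) -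
        C * ((Complex.I * (ω : ℂ)) • (1 : Matrix (Fin m) (Fin m) ℂ) - A)⁻¹ * Cᴴ) = 1 := by
  have hiω : star (Complex.I * ω) = -(Complex.I * ω) := by
    simp [Complex.conj_ofReal]
  have hM : (Complex.I * ω) • (1 : Matrix (Fin m) (Fin m) ℂ) - A +
      ((Complex.I * ω) • (1 : Matrix (Fin m) (Fin m) ℂ) - A)ᴴ = Cᴴ * C := by
    rw [smul_one_sub_add_conjTranspose hiω, hA, neg_half_smul_sub_I_smul_add_conjTranspose C hΩ,
      neg_neg]
  have hU := one_sub_mul_nonsing_inv_mul_conjTranspose_mem_unitary hM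
  rw [← star_eq_conjTranspose]
  exact ⟨Unitary.mul_star_self_of_mem hU, Unitary.star_mul_self_of_mem hU⟩

theorem transfer_function_unitary_S_eq_one {n m : ℕ}
    (C : Matrix (Fin n) (Fin m) ℂ) (Ω : Matrix (Fin m) (Fin m) ℂ) (hΩ : Ωᴴ = Ω)
    (A : Matrix (Fin m) (Fin m) ℂ)
    (hA : A = -((1 / 2 : ℂ) • (Cᴴ * C)) - Complex.I • Ω)
    (ω : ℝ) (hInv : IsUnit ((Complex.I * (ω : ℂ)) • (1 : Matrix (Fin m) (Fin m) ℂ) - A)) :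
    ((1 : Matrix (Fin n) (Fin n) ℂ) -
        C * ((Complex.I * (ω : ℂ)) • (1 : Matrix (Fin m) (Fin m) ℂ) - A)⁻¹ * Cᴴ) *
      ((1 : Matrix (Fin n) (Fin n) ℂ) -
        C * ((Complex.I * (ω : ℂ)) • (1 : Matrix (Fin m) (Fin m) ℂ) - A)⁻¹ * Cᴴ)ᴴ = 1 ∧
    ((1 : Matrix (Fin n) (Fin n) ℂ) -
        C * ((Complex.I * (ω : ℂ)) • (1 : Matrix (Fin m) (Fin m) ℂ) - A)⁻¹ * Cᴴ)ᴴ *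
      ((1 : Matrix (Fin n) (Fin n) ℂ) -
        C * ((Complex.I * (ω : ℂ)) • (1 : Matrix (Fin m) (Fin m) ℂ) - A)⁻¹ * Cᴴ) = 1 :=
  transfer_function_unitary_S_eq_one_general C Ω hΩ A hA ω
end

section
/- Let C ∈ ℂ^{n×m}, Ω ∈ ℂ^{m×m} Hermitian, S ∈ ℂ^{n×n} unitary, and A = -(1/2)C†C - iΩ. For any ω ∈ ℝ with iωI_m - A invertible, the matrix Ξ(iω) = (I_n - C(iωI_m - A)^{-1}C†) S is unitary. -/
/-!
With `M = iω - A`, the relation `A + Aᴴ = -CᴴC` (from the Hermiticity of `Ω`) and the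
skew-Hermiticity of `iω` give `M + Mᴴ = CᴴC`. For such an `M` the matrix
`T = 1 - C M⁻¹ Cᴴ` is unitary: expanding `T Tᴴ`, the cross term
`C M⁻¹ (CᴴC) M⁻ᴴ Cᴴ = C M⁻¹ (M + Mᴴ) M⁻ᴴ Cᴴ = C M⁻ᴴ Cᴴ + C M⁻¹ Cᴴ` cancels the two linear terms,
and `Tᴴ T = 1` is the same computation for `Mᴴ`. Hence `Ξ(iω) = T S` is a product of unitaries.
-/

open Matrix

namespace Matrix

section UnitaryResolvent

variable {R : Type*} [CommRing R] [StarRing R] {m n : Type*} [Fintype m] [DecidableEq m]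
  [DecidableEq n]

theorem inv_mul_add_conjTranspose_mul_inv_conjTranspose {M : Matrix m m R} (hM : IsUnit M) :
    M⁻¹ * (M + Mᴴ) * M⁻¹ᴴ = M⁻¹ᴴ + M⁻¹ := by
  have hdet : IsUnit M.det := (isUnit_iff_isUnit_det M).mp hM
  have hdetH : IsUnit Mᴴ.det := (isUnit_iff_isUnit_det _).mp ((isUnit_conjTranspose M).mpr hM)
  rw [conjTranspose_nonsing_inv, Matrix.mul_add, Matrix.add_mul, nonsing_inv_mul M hdet,
    Matrix.mul_assoc, mul_nonsing_inv _ hdetH, Matrix.one_mul, Matrix.mul_one]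

theorem one_sub_mul_inv_mul_conjTranspose_mul_conjTranspose [Fintype n] (C : Matrix n m R)
    {M : Matrix m m R} (hM : IsUnit M) (hMC : M + Mᴴ = Cᴴ * C) :
    (1 - C * M⁻¹ * Cᴴ) * (1 - C * M⁻¹ * Cᴴ)ᴴ = 1 := by
  have key : C * M⁻¹ * Cᴴ * (C * M⁻¹ᴴ * Cᴴ) = C * M⁻¹ᴴ * Cᴴ + C * M⁻¹ * Cᴴ := by
    calc C * M⁻¹ * Cᴴ * (C * M⁻¹ᴴ * Cᴴ) = C * (M⁻¹ * (Cᴴ * C) * M⁻¹ᴴ) * Cᴴ := by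
          simp only [Matrix.mul_assoc]
      _ = C * M⁻¹ᴴ * Cᴴ + C * M⁻¹ * Cᴴ := by
          rw [← hMC, inv_mul_add_conjTranspose_mul_inv_conjTranspose hM, Matrix.mul_add,
            Matrix.add_mul]
  simp only [conjTranspose_sub, conjTranspose_one, conjTranspose_mul,
    conjTranspose_conjTranspose, Matrix.sub_mul, Matrix.mul_sub, Matrix.one_mul, Matrix.mul_one,
    ← Matrix.mul_assoc] at key ⊢
  rw [key]
  abel

theorem conjTranspose_one_sub_mul_inv_mul_conjTranspose (C : Matrix n m R) (M : Matrix m m R) :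
    (1 - C * M⁻¹ * Cᴴ)ᴴ = 1 - C * Mᴴ⁻¹ * Cᴴ := by
  simp only [conjTranspose_sub, conjTranspose_one, conjTranspose_mul, conjTranspose_conjTranspose,
    conjTranspose_nonsing_inv, Matrix.mul_assoc]

theorem one_sub_mul_inv_mul_conjTranspose_mem_unitary [Fintype n] (C : Matrix n m R)
    {M : Matrix m m R} (hM : IsUnit M) (hMC : M + Mᴴ = Cᴴ * C) :
    1 - C * M⁻¹ * Cᴴ ∈ unitary (Matrix n n R) := by
  refine ⟨?_, one_sub_mul_inv_mul_conjTranspose_mul_conjTranspose C hM hMC⟩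
  have hMCH : Mᴴ + Mᴴᴴ = Cᴴ * C := by rw [conjTranspose_conjTranspose, add_comm, hMC]
  simpa only [star_eq_conjTranspose, conjTranspose_one_sub_mul_inv_mul_conjTranspose,
    conjTranspose_conjTranspose] using
    one_sub_mul_inv_mul_conjTranspose_mul_conjTranspose C ((isUnit_conjTranspose M).mpr hM) hMCH

end UnitaryResolvent

theorem I_mul_smul_one_sub_add_conjTranspose {m : Type*} [DecidableEq m] (A : Matrix m m ℂ)
    (ω : ℝ) :
    (Complex.I * ω) • 1 - A + ((Complex.I * ω) • 1 - A)ᴴ = -(A + Aᴴ) := by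
  have hskew : star (Complex.I * ω) = -(Complex.I * ω) := by simp
  rw [conjTranspose_sub, conjTranspose_smul, conjTranspose_one, hskew, neg_smul]
  abel

theorem add_conjTranspose_neg_half_smul_sub_I_smul {m n : Type*} [Fintype n] (C : Matrix n m ℂ)
    {Ω : Matrix m m ℂ} (hΩ : Ω.IsHermitian) :
    (-((1 / 2 : ℂ) • (Cᴴ * C)) - Complex.I • Ω) + (-((1 / 2 : ℂ) • (Cᴴ * C)) - Complex.I • Ω)ᴴ =
      -(Cᴴ * C) := by
  have hhalf : star (1 / 2 : ℂ) = 1 / 2 := by simp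
  simp only [conjTranspose_sub, conjTranspose_neg, conjTranspose_smul, conjTranspose_mul,
    conjTranspose_conjTranspose, hΩ.eq, hhalf, Complex.star_def, Complex.conj_I]
  module

end Matrix

theorem transfer_function_unitary {n m : ℕ}
    (C : Matrix (Fin n) (Fin m) ℂ) (Ω : Matrix (Fin m) (Fin m) ℂ) (hΩ : Ωᴴ = Ω)
    (S : Matrix (Fin n) (Fin n) ℂ) (hS : S * Sᴴ = 1 ∧ Sᴴ * S = 1)
    (A : Matrix (Fin m) (Fin m) ℂ)
    (hA : A = -((1 / 2 : ℂ) • (Cᴴ * C)) - Complex.I • Ω)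
    (ω : ℝ) (hInv : IsUnit ((Complex.I * (ω : ℂ)) • (1 : Matrix (Fin m) (Fin m) ℂ) - A)) :
    (((1 : Matrix (Fin n) (Fin n) ℂ) -
        C * ((Complex.I * (ω : ℂ)) • (1 : Matrix (Fin m) (Fin m) ℂ) - A)⁻¹ * Cᴴ) * S) *
      (((1 : Matrix (Fin n) (Fin n) ℂ) -
        C * ((Complex.I * (ω : ℂ)) • (1 : Matrix (Fin m) (Fin m) ℂ) - A)⁻¹ * Cᴴ) * S)ᴴ = 1 ∧
    (((1 : Matrix (Fin n) (Fin n) ℂ) -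
        C * ((Complex.I * (ω : ℂ)) • (1 : Matrix (Fin m) (Fin m) ℂ) - A)⁻¹ * Cᴴ) * S)ᴴ *
      (((1 : Matrix (Fin n) (Fin n) ℂ) -
        C * ((Complex.I * (ω : ℂ)) • (1 : Matrix (Fin m) (Fin m) ℂ) - A)⁻¹ * Cᴴ) * S) = 1 := by
  set M : Matrix (Fin m) (Fin m) ℂ := (Complex.I * (ω : ℂ)) • 1 - A
  have hM : M + Mᴴ = Cᴴ * C := by
    rw [I_mul_smul_one_sub_add_conjTranspose, hA, add_conjTranspose_neg_half_smul_sub_I_smul C hΩ,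
      neg_neg]
  have hΞ : (1 - C * M⁻¹ * Cᴴ) * S ∈ unitary (Matrix (Fin n) (Fin n) ℂ) :=
    Submonoid.mul_mem _ (one_sub_mul_inv_mul_conjTranspose_mem_unitary C hInv hM) ⟨hS.2, hS.1⟩
  exact ⟨hΞ.2, hΞ.1⟩
end

section
/- Let C ∈ ℂ^{n×m}, let ε : ℝ → ℝ be a polynomial with real coefficients, set A = -(1/2)C†C - i·ε(C†C) and Ã = -(1/2)CC† - i·ε(CC†) (functional calculus on the Hermitian matrices C†C, CC†). Then for every s ∈ ℂ with both sI_m - A and sI_n - Ã invertible, the transfer matrix Ξ(s) = I_n - C(sI_m - A)^{-1}C† satisfies (sI_n - Ã)Ξ(s) = sI_n + Ã†. -/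
open Matrix Polynomial

/-!
The matrix `C` intertwines `Cᴴ * C` with `C * Cᴴ`, hence every polynomial in them, so
`(s - Ã) * C = C * (s - A)` and the resolvent in `Ξ(s)` cancels:
`(s - Ã) * Ξ(s) = s - Ã - C * Cᴴ`.
As `ε` has real coefficients, `ε(C * Cᴴ)` is Hermitian, which gives `Ãᴴ = -Ã - C * Cᴴ`.
-/

theorem IsSelfAdjoint.aeval {R A : Type*} [CommSemiring R] [StarRing R] [TrivialStar R]
    [Semiring A] [StarRing A] [Algebra R A] [StarModule R A] {a : A} (ha : IsSelfAdjoint a)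
    (p : R[X]) : IsSelfAdjoint (aeval a p) := by
  induction p using Polynomial.induction_on' with
  | add p q hp hq => simpa only [map_add] using hp.add hq
  | monomial k r =>
    rw [aeval_monomial, Algebra.algebraMap_eq_smul_one, smul_one_mul]
    exact (IsSelfAdjoint.all r).smul (ha.pow k)

namespace Matrix

variable {R l m : Type*} [Fintype l] [Fintype m] [DecidableEq l] [DecidableEq m]

section CommSemiring

variable [CommSemiring R]

theorem mul_pow_eq_pow_mul_of_mul_eq_mul {X : Matrix l m R} {P : Matrix l l R}
    {Q : Matrix m m R} (h : X * Q = P * X) (k : ℕ) : X * Q ^ k = P ^ k * X := by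
  induction k with
  | zero => simp
  | succ k ih =>
    rw [pow_succ, ← Matrix.mul_assoc, ih, Matrix.mul_assoc, h, ← Matrix.mul_assoc, ← pow_succ]

theorem mul_aeval_eq_aeval_mul_of_mul_eq_mul {X : Matrix l m R} {P : Matrix l l R}
    {Q : Matrix m m R} (h : X * Q = P * X) (p : R[X]) : X * aeval Q p = aeval P p * X := by
  induction p using Polynomial.induction_on' with
  | add p q hp hq => rw [map_add, map_add, Matrix.mul_add, Matrix.add_mul, hp, hq]
  | monomial k r =>
    rw [aeval_monomial, aeval_monomial, Algebra.algebraMap_eq_smul_one,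
      Algebra.algebraMap_eq_smul_one, smul_one_mul, smul_one_mul, Matrix.mul_smul,
      Matrix.smul_mul, mul_pow_eq_pow_mul_of_mul_eq_mul h]

theorem mul_conjTranspose_mul_self_aeval [StarRing R] (C : Matrix l m R) (p : R[X]) :
    C * aeval (Cᴴ * C) p = aeval (C * Cᴴ) p * C :=
  mul_aeval_eq_aeval_mul_of_mul_eq_mul (Matrix.mul_assoc C Cᴴ C).symm p

end CommSemiring

theorem mul_one_sub_mul_inv_mul [CommRing R] {X : Matrix l m R} {Y : Matrix m l R}
    {P : Matrix l l R} {Q : Matrix m m R} (h : P * X = X * Q) (hQ : IsUnit Q) :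
    P * (1 - X * Q⁻¹ * Y) = P - X * Y := by
  rw [Matrix.mul_sub, Matrix.mul_one, ← Matrix.mul_assoc, ← Matrix.mul_assoc, h,
    Matrix.mul_assoc X, mul_nonsing_inv _ ((isUnit_iff_isUnit_det Q).mp hQ), Matrix.mul_one]

end Matrix

theorem transfer_function_commuting_case_general {n m : ℕ}
    (C : Matrix (Fin n) (Fin m) ℂ) (ε : Polynomial ℝ)
    (A : Matrix (Fin m) (Fin m) ℂ) (Atil : Matrix (Fin n) (Fin n) ℂ)
    (hA : A = -((1 / 2 : ℂ) • (Cᴴ * C)) -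
        Complex.I • (aeval (Cᴴ * C) (ε.map (algebraMap ℝ ℂ))))
    (hAtil : Atil = -((1 / 2 : ℂ) • (C * Cᴴ)) -
        Complex.I • (aeval (C * Cᴴ) (ε.map (algebraMap ℝ ℂ))))
    (s : ℂ)
    (hA_inv : IsUnit (s • (1 : Matrix (Fin m) (Fin m) ℂ) - A)) :
    (s • (1 : Matrix (Fin n) (Fin n) ℂ) - Atil) *
        ((1 : Matrix (Fin n) (Fin n) ℂ) -
          C * (s • (1 : Matrix (Fin m) (Fin m) ℂ) - A)⁻¹ * Cᴴ) =
      s • (1 : Matrix (Fin n) (Fin n) ℂ) + Atilᴴ := by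
  have hCA : C * A = Atil * C := by
    simp only [hA, hAtil, Matrix.mul_sub, Matrix.sub_mul, Matrix.mul_neg, Matrix.neg_mul,
      Matrix.mul_smul, Matrix.smul_mul, mul_conjTranspose_mul_self_aeval, ← Matrix.mul_assoc]
  have hAtil_adjoint : Atilᴴ = -Atil - C * Cᴴ := by
    have hE : (aeval (C * Cᴴ) (ε.map (algebraMap ℝ ℂ)))ᴴ =
        aeval (C * Cᴴ) (ε.map (algebraMap ℝ ℂ)) := by
      rw [aeval_map_algebraMap]
      exact (isHermitian_mul_conjTranspose_self C).isSelfAdjoint.aeval ε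
    rw [hAtil, conjTranspose_sub, conjTranspose_neg, conjTranspose_smul, conjTranspose_smul, hE,
      (isHermitian_mul_conjTranspose_self C).eq, Complex.star_def, Complex.conj_I, map_div₀,
      map_one, Complex.conj_ofNat]
    module
  have hresolvent : (s • (1 : Matrix (Fin n) (Fin n) ℂ) - Atil) * C =
      C * (s • (1 : Matrix (Fin m) (Fin m) ℂ) - A) := by
    simp only [Matrix.sub_mul, Matrix.mul_sub, Matrix.smul_mul, Matrix.mul_smul, Matrix.one_mul,
      Matrix.mul_one, hCA]
  rw [mul_one_sub_mul_inv_mul hresolvent hA_inv, hAtil_adjoint]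
  abel

theorem transfer_function_commuting_case {n m : ℕ}
    (C : Matrix (Fin n) (Fin m) ℂ) (ε : Polynomial ℝ)
    (A : Matrix (Fin m) (Fin m) ℂ) (Atil : Matrix (Fin n) (Fin n) ℂ)
    (hA : A = -((1 / 2 : ℂ) • (Cᴴ * C)) -
        Complex.I • (aeval (Cᴴ * C) (ε.map (algebraMap ℝ ℂ))))
    (hAtil : Atil = -((1 / 2 : ℂ) • (C * Cᴴ)) -
        Complex.I • (aeval (C * Cᴴ) (ε.map (algebraMap ℝ ℂ))))
    (s : ℂ)
    (hA_inv : IsUnit (s • (1 : Matrix (Fin m) (Fin m) ℂ) - A))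
    (hAtil_inv : IsUnit (s • (1 : Matrix (Fin n) (Fin n) ℂ) - Atil)) :
    (s • (1 : Matrix (Fin n) (Fin n) ℂ) - Atil) *
        ((1 : Matrix (Fin n) (Fin n) ℂ) -
          C * (s • (1 : Matrix (Fin m) (Fin m) ℂ) - A)⁻¹ * Cᴴ) =
      s • (1 : Matrix (Fin n) (Fin n) ℂ) + Atilᴴ :=
  transfer_function_commuting_case_general C ε A Atil hA hAtil s hA_inv
end

section
/- Let U = [[U11, U12],[U21, U22]] be a unitary operator (block matrix) on H1 ⊕ H2 and let X be a unitary operator on H2 such that I - X U22 is invertible. Then φ(X) = U11 + U12 (I - X U22)^{-1} X U21 is a unitary operator on H1. -/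
/-!
With `W = (1 - X U₂₂)⁻¹ X U₂₁` one has `W = X G` for `G = U₂₁ + U₂₂ W`, and `U` sends the column
`[1; W]` to `[φ(X); G]`. Since `U` preserves Gram matrices, `φ(X)ᴴ φ(X) + Gᴴ G = 1 + Wᴴ W`, while
`Wᴴ W = Gᴴ G` because `X` is an isometry. So `φ(X)` is an isometry, and a square isometry is unitary.
-/

open Matrix

theorem conjTranspose_mul_self_eq_one_of_feedback {m n α : Type*} [Fintype m] [Fintype n]
    [DecidableEq m] [DecidableEq n] [Ring α] [StarRing α]
    {U11 : Matrix m m α} {U12 : Matrix m n α} {U21 : Matrix n m α} {U22 : Matrix n n α}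
    (hU : (fromBlocks U11 U12 U21 U22)ᴴ * fromBlocks U11 U12 U21 U22 = 1)
    {X : Matrix n n α} (hX : Xᴴ * X = 1) {W : Matrix n m α} (hW : W = X * (U21 + U22 * W)) :
    (U11 + U12 * W)ᴴ * (U11 + U12 * W) = 1 := by
  have hcol : fromBlocks U11 U12 U21 U22 * fromRows (1 : Matrix m m α) W =
      fromRows (U11 + U12 * W) (U21 + U22 * W) := by
    rw [fromBlocks_mul_fromRows, Matrix.mul_one, Matrix.mul_one]
  have hgram : (U11 + U12 * W)ᴴ * (U11 + U12 * W) + (U21 + U22 * W)ᴴ * (U21 + U22 * W) =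
      1 + Wᴴ * W := by
    have := congrArg (fun v => vᴴ * v) hcol
    simp only [conjTranspose_mul, Matrix.mul_assoc] at this
    rw [← Matrix.mul_assoc (fromBlocks U11 U12 U21 U22)ᴴ, hU, Matrix.one_mul] at this
    simpa only [conjTranspose_fromRows_eq_fromCols_conjTranspose, fromCols_mul_fromRows,
      conjTranspose_one, Matrix.one_mul] using this.symm
  have hWG : Wᴴ * W = (U21 + U22 * W)ᴴ * (U21 + U22 * W) := by
    conv_lhs => rw [hW]
    rw [conjTranspose_mul, Matrix.mul_assoc, ← Matrix.mul_assoc Xᴴ, hX, Matrix.one_mul]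
  rw [hWG] at hgram
  exact add_right_cancel hgram

theorem inv_feedback_eq {m n α : Type*} [Fintype n] [DecidableEq n] [Ring α]
    {X U22 Y : Matrix n n α} (hY : (1 - X * U22) * Y = 1) (U21 : Matrix n m α) :
    Y * X * U21 = X * (U21 + U22 * (Y * X * U21)) := by
  have hY' : Y = 1 + X * U22 * Y := by
    rwa [Matrix.sub_mul, Matrix.one_mul, sub_eq_iff_eq_add] at hY
  conv_lhs => rw [hY']
  simp only [Matrix.add_mul, Matrix.mul_add, Matrix.one_mul, Matrix.mul_assoc]

theorem mobius_transform_unitary {p q : ℕ}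
    (U11 : Matrix (Fin p) (Fin p) ℂ) (U12 : Matrix (Fin p) (Fin q) ℂ)
    (U21 : Matrix (Fin q) (Fin p) ℂ) (U22 : Matrix (Fin q) (Fin q) ℂ)
    (hU : (fromBlocks U11 U12 U21 U22) * (fromBlocks U11 U12 U21 U22)ᴴ = 1 ∧
          (fromBlocks U11 U12 U21 U22)ᴴ * (fromBlocks U11 U12 U21 U22) = 1)
    (X : Matrix (Fin q) (Fin q) ℂ) (hX : X * Xᴴ = 1 ∧ Xᴴ * X = 1)
    (hInv : IsUnit ((1 : Matrix (Fin q) (Fin q) ℂ) - X * U22)) :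
    (U11 + U12 * ((1 : Matrix (Fin q) (Fin q) ℂ) - X * U22)⁻¹ * X * U21) *
      (U11 + U12 * ((1 : Matrix (Fin q) (Fin q) ℂ) - X * U22)⁻¹ * X * U21)ᴴ = 1 ∧
    (U11 + U12 * ((1 : Matrix (Fin q) (Fin q) ℂ) - X * U22)⁻¹ * X * U21)ᴴ *
      (U11 + U12 * ((1 : Matrix (Fin q) (Fin q) ℂ) - X * U22)⁻¹ * X * U21) = 1 := by
  set Y := ((1 : Matrix (Fin q) (Fin q) ℂ) - X * U22)⁻¹
  have hY : (1 - X * U22) * Y = 1 := mul_nonsing_inv _ ((isUnit_iff_isUnit_det _).mp hInv)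
  have hisom : (U11 + U12 * Y * X * U21)ᴴ * (U11 + U12 * Y * X * U21) = 1 := by
    simpa only [Matrix.mul_assoc] using
      conjTranspose_mul_self_eq_one_of_feedback hU.2 hX.2 (inv_feedback_eq hY U21)
  exact ⟨mul_eq_one_comm.mp hisom, hisom⟩
end

section
/- Let S = [[S_ii, S_ie],[S_ei, S_ee]] be a unitary block matrix and η a unitary matrix of the same size as S_ii with η - S_ii invertible. Then S_red = S_ee + S_ei (η - S_ii)^{-1} S_ie is unitary. -/
/-!
Feed the input `(X, 1)` with `X = (η - S_ii)⁻¹ S_ie` into `S`: the internal output is `η X` and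
the external one is `S_red`. Since `S` and `η` preserve Gram matrices,
`Xᴴ X + 1 = (η X)ᴴ (η X) + S_redᴴ S_red = Xᴴ X + S_redᴴ S_red`, so `S_red` is an isometry,
hence unitary because it is square.
-/

open Matrix

variable {R : Type*} [Ring R] [StarRing R] {m n : Type*} [Fintype m] [Fintype n]

theorem Matrix.conjTranspose_fromRows_mul_self {l : Type*} (A : Matrix m l R)
    (B : Matrix n l R) : (fromRows A B)ᴴ * fromRows A B = Aᴴ * A + Bᴴ * B := by
  rw [conjTranspose_fromRows_eq_fromCols_conjTranspose, fromCols_mul_fromRows]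

theorem Matrix.conjTranspose_mul_mul_self_of_conjTranspose_mul_self_eq_one {k l : Type*}
    [Fintype k] [DecidableEq k] {U : Matrix k k R} (hU : Uᴴ * U = 1) (A : Matrix k l R) :
    (U * A)ᴴ * (U * A) = Aᴴ * A := by
  rw [conjTranspose_mul, Matrix.mul_assoc, ← Matrix.mul_assoc Uᴴ, hU, Matrix.one_mul]

theorem Matrix.conjTranspose_mul_self_feedback_eq_one [DecidableEq m] [DecidableEq n]
    {Sii : Matrix m m R} {Sie : Matrix m n R} {Sei : Matrix n m R} {See : Matrix n n R}
    (hS : (fromBlocks Sii Sie Sei See)ᴴ * fromBlocks Sii Sie Sei See = 1)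
    {η : Matrix m m R} (hη : ηᴴ * η = 1) {X : Matrix m n R} (hX : Sii * X + Sie = η * X) :
    (See + Sei * X)ᴴ * (See + Sei * X) = 1 := by
  have hout : fromBlocks Sii Sie Sei See * fromRows X (1 : Matrix n n R) =
      fromRows (η * X) (See + Sei * X) := by
    rw [fromBlocks_mul_fromRows, Matrix.mul_one, Matrix.mul_one, hX, add_comm (Sei * X)]
  have hgram : Xᴴ * X + 1 = Xᴴ * X + (See + Sei * X)ᴴ * (See + Sei * X) := by
    calc Xᴴ * X + 1 = (fromRows X (1 : Matrix n n R))ᴴ * fromRows X (1 : Matrix n n R) := by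
          rw [conjTranspose_fromRows_mul_self, conjTranspose_one, Matrix.one_mul]
      _ = (fromRows (η * X) (See + Sei * X))ᴴ * fromRows (η * X) (See + Sei * X) := by
          rw [← hout, conjTranspose_mul_mul_self_of_conjTranspose_mul_self_eq_one hS]
      _ = Xᴴ * X + (See + Sei * X)ᴴ * (See + Sei * X) := by
          rw [conjTranspose_fromRows_mul_self,
            conjTranspose_mul_mul_self_of_conjTranspose_mul_self_eq_one hη]
  exact (add_left_cancel hgram).symm

theorem reduced_scattering_unitary {ni ne : ℕ}
    (Sii : Matrix (Fin ni) (Fin ni) ℂ) (Sie : Matrix (Fin ni) (Fin ne) ℂ)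
    (Sei : Matrix (Fin ne) (Fin ni) ℂ) (See : Matrix (Fin ne) (Fin ne) ℂ)
    (hS : (fromBlocks Sii Sie Sei See) * (fromBlocks Sii Sie Sei See)ᴴ = 1 ∧
          (fromBlocks Sii Sie Sei See)ᴴ * (fromBlocks Sii Sie Sei See) = 1)
    (η : Matrix (Fin ni) (Fin ni) ℂ) (hη : η * ηᴴ = 1 ∧ ηᴴ * η = 1)
    (hInv : IsUnit (η - Sii)) :
    (See + Sei * (η - Sii)⁻¹ * Sie) * (See + Sei * (η - Sii)⁻¹ * Sie)ᴴ = 1 ∧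
    (See + Sei * (η - Sii)⁻¹ * Sie)ᴴ * (See + Sei * (η - Sii)⁻¹ * Sie) = 1 := by
  have hX : Sii * ((η - Sii)⁻¹ * Sie) + Sie = η * ((η - Sii)⁻¹ * Sie) := by
    rw [eq_comm, ← sub_eq_iff_eq_add', ← Matrix.sub_mul,
      mul_nonsing_inv_cancel_left _ _ ((isUnit_iff_isUnit_det _).mp hInv)]
  have hred := conjTranspose_mul_self_feedback_eq_one hS.2 hη.2 hX
  rw [← Matrix.mul_assoc] at hred
  exact ⟨mul_eq_one_comm.mp hred, hred⟩
end

section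
/- Let S be a block unitary matrix with blocks S_ii, S_ie, S_ei, S_ee, η unitary with η - S_ii invertible, and let C_i, C_e be coupling matrices. Define S_red = S_ee + S_ei(η - S_ii)^{-1}S_ie and C_red = S_ei(η - S_ii)^{-1}C_i + C_e. Then C_red† S_red = C_i† η(η - S_ii)^{-1} S_ie + C_e† S_red; equivalently, C_i†[S_ie + S_ii(η - S_ii)^{-1}S_ie] + C_e†[S_ee + S_ei(η - S_ii)^{-1}S_ie] = C_red† S_red. -/
/-!
Put `X = (η - Sᵢᵢ)⁻¹ Sᵢₑ`, so that `Sᵢₑ + Sᵢᵢ X = η X`. The isometry relations of the first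
block column of `S`, together with `η†η = 1`, turn `Sₑᵢ† S_red = Sₑᵢ†Sₑₑ + Sₑᵢ†Sₑᵢ X` into
`X - Sᵢᵢ† η X = (η - Sᵢᵢ)† η X`; in `C_red† S_red` the factor `(η - Sᵢᵢ)†` then cancels against
the `((η - Sᵢᵢ)⁻¹)†` contributed by `C_red†`.
-/

open Matrix

namespace Matrix

variable {k l n α : Type*} [Fintype k] [Fintype l] [DecidableEq k]

theorem fromBlocks_conjTranspose_mul_self_eq_one_iff [DecidableEq l] [Semiring α] [StarRing α]
    (A : Matrix k k α) (B : Matrix k l α) (C : Matrix l k α) (D : Matrix l l α) :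
    (fromBlocks A B C D)ᴴ * fromBlocks A B C D = 1 ↔
      Aᴴ * A + Cᴴ * C = 1 ∧ Aᴴ * B + Cᴴ * D = 0 ∧
        Bᴴ * A + Dᴴ * C = 0 ∧ Bᴴ * B + Dᴴ * D = 1 := by
  rw [fromBlocks_conjTranspose, fromBlocks_multiply, ← fromBlocks_one, fromBlocks_inj]

theorem add_mul_nonsing_inv_sub_mul_eq_mul [CommRing α] (η S : Matrix k k α)
    (B : Matrix k n α) (h : IsUnit (η - S).det) :
    B + S * ((η - S)⁻¹ * B) = η * ((η - S)⁻¹ * B) := by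
  have hB : (η - S) * ((η - S)⁻¹ * B) = B := mul_nonsing_inv_cancel_left _ B h
  rw [Matrix.sub_mul] at hB
  exact eq_sub_iff_add_eq.mp hB.symm

theorem conjTranspose_mul_add_mul_eq_conjTranspose_sub_mul_mul [Ring α] [StarRing α]
    {Sii η : Matrix k k α} {Sie : Matrix k l α} {Sei : Matrix l k α} {See : Matrix l l α}
    {X : Matrix k l α} (h₁₁ : Siiᴴ * Sii + Seiᴴ * Sei = 1) (h₁₂ : Siiᴴ * Sie + Seiᴴ * See = 0)
    (hη : ηᴴ * η = 1) (hX : Sie + Sii * X = η * X) :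
    Seiᴴ * (See + Sei * X) = (η - Sii)ᴴ * (η * X) := by
  calc Seiᴴ * (See + Sei * X) = Seiᴴ * See + (Seiᴴ * Sei) * X := by
        rw [Matrix.mul_add, Matrix.mul_assoc]
    _ = X - Siiᴴ * (Sie + Sii * X) := by
        rw [eq_neg_of_add_eq_zero_right h₁₂, eq_sub_of_add_eq' h₁₁, Matrix.sub_mul,
          Matrix.one_mul, Matrix.mul_add, Matrix.mul_assoc]
        abel
    _ = (η - Sii)ᴴ * (η * X) := by
        rw [hX, conjTranspose_sub, Matrix.sub_mul, ← Matrix.mul_assoc ηᴴ η X, hη, Matrix.one_mul]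

end Matrix

theorem feedback_reduction_CdagS_identity {ni ne m : ℕ}
    (Sii : Matrix (Fin ni) (Fin ni) ℂ) (Sie : Matrix (Fin ni) (Fin ne) ℂ)
    (Sei : Matrix (Fin ne) (Fin ni) ℂ) (See : Matrix (Fin ne) (Fin ne) ℂ)
    (hS : (fromBlocks Sii Sie Sei See) * (fromBlocks Sii Sie Sei See)ᴴ = 1 ∧
          (fromBlocks Sii Sie Sei See)ᴴ * (fromBlocks Sii Sie Sei See) = 1)
    (η : Matrix (Fin ni) (Fin ni) ℂ) (hη : η * ηᴴ = 1 ∧ ηᴴ * η = 1)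
    (hInv : IsUnit (η - Sii))
    (Ci : Matrix (Fin ni) (Fin m) ℂ) (Ce : Matrix (Fin ne) (Fin m) ℂ)
    (Sred : Matrix (Fin ne) (Fin ne) ℂ) (Cred : Matrix (Fin ne) (Fin m) ℂ)
    (hSred : Sred = See + Sei * (η - Sii)⁻¹ * Sie)
    (hCred : Cred = Sei * (η - Sii)⁻¹ * Ci + Ce) :
    Credᴴ * Sred = Ciᴴ * η * (η - Sii)⁻¹ * Sie + Ceᴴ * Sred ∧
    Ciᴴ * (Sie + Sii * (η - Sii)⁻¹ * Sie) +
        Ceᴴ * (See + Sei * (η - Sii)⁻¹ * Sie) = Credᴴ * Sred := by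
  obtain ⟨h₁₁, h₁₂, -, -⟩ :=
    (fromBlocks_conjTranspose_mul_self_eq_one_iff Sii Sie Sei See).mp hS.2
  have hdet : IsUnit (η - Sii).det := (isUnit_iff_isUnit_det _).mp hInv
  have hX := add_mul_nonsing_inv_sub_mul_eq_mul η Sii Sie hdet
  have hSei : Seiᴴ * Sred = (η - Sii)ᴴ * (η * ((η - Sii)⁻¹ * Sie)) := by
    rw [hSred, Matrix.mul_assoc Sei]
    exact conjTranspose_mul_add_mul_eq_conjTranspose_sub_mul_mul h₁₁ h₁₂ hη.2 hX
  have hCredSred : Credᴴ * Sred = Ciᴴ * η * (η - Sii)⁻¹ * Sie + Ceᴴ * Sred := by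
    rw [hCred, conjTranspose_add, conjTranspose_mul, conjTranspose_mul, Matrix.add_mul,
      Matrix.mul_assoc, Matrix.mul_assoc, hSei, conjTranspose_nonsing_inv,
      nonsing_inv_mul_cancel_left _ _ (by rwa [det_conjTranspose, isUnit_star])]
    simp only [Matrix.mul_assoc]
  refine ⟨hCredSred, ?_⟩
  rw [hCredSred, ← hSred, Matrix.mul_assoc Sii, hX]
  simp only [Matrix.mul_assoc]
end

section
/- Let S_ii be a square complex matrix and η a unitary matrix of the same size with η - S_ii invertible, and suppose S_ii†S_ii + S_ei†S_ei = I for some matrix S_ei. Then I + 2 S_ii(η - S_ii)^{-1} - (η† - S_ii†)^{-1} S_ei† S_ei (η - S_ii)^{-1} = 2i·Im{ S_ii(η - S_ii)^{-1} }, where Im{M} = (M - M†)/(2i). -/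
/-!
Write `A = η - Sii` and `X = Sii A⁻¹`. Since `ηᴴ η = 1` and `η = A + Sii`, the isometry condition gives
`Seiᴴ Sei = 1 - Siiᴴ Sii = Aᴴ A + Aᴴ Sii + Siiᴴ A`; conjugating by `A⁻¹` turns this into
`A⁻ᴴ Seiᴴ Sei A⁻¹ = 1 + X + Xᴴ`, so the left-hand side collapses to `X - Xᴴ`.
-/

open Matrix

theorem star_mul_self_sub_star_mul_self {R : Type*} [Ring R] [StarRing R] (η s : R) :
    star η * η - star s * s =
      star (η - s) * (η - s) + star (η - s) * s + star s * (η - s) := by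
  rw [star_sub]
  noncomm_ring

theorem Matrix.conjTranspose_inv_mul_mul_inv {n α : Type*} [Fintype n] [DecidableEq n]
    [CommRing α] [StarRing α] {A : Matrix n n α} (hA : IsUnit A) (S : Matrix n n α) :
    Aᴴ⁻¹ * (Aᴴ * A + Aᴴ * S + Sᴴ * A) * A⁻¹ = 1 + S * A⁻¹ + (S * A⁻¹)ᴴ := by
  have hdet : IsUnit A.det := (isUnit_iff_isUnit_det A).mp hA
  have hdetH : IsUnit Aᴴ.det := by rwa [det_conjTranspose, isUnit_star]
  rw [conjTranspose_mul, conjTranspose_nonsing_inv]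
  simp only [Matrix.mul_add, Matrix.add_mul, ← Matrix.mul_assoc, nonsing_inv_mul _ hdetH,
    Matrix.one_mul, mul_nonsing_inv _ hdet, mul_nonsing_inv_cancel_right _ _ hdet]

theorem feedback_X_identity {ni ne : ℕ}
    (Sii : Matrix (Fin ni) (Fin ni) ℂ) (Sei : Matrix (Fin ne) (Fin ni) ℂ)
    (η : Matrix (Fin ni) (Fin ni) ℂ) (hη : η * ηᴴ = 1 ∧ ηᴴ * η = 1)
    (hInv : IsUnit (η - Sii))
    (hiso : Siiᴴ * Sii + Seiᴴ * Sei = 1) :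
    (1 : Matrix (Fin ni) (Fin ni) ℂ) + 2 • (Sii * (η - Sii)⁻¹) -
        (ηᴴ - Siiᴴ)⁻¹ * Seiᴴ * Sei * (η - Sii)⁻¹ =
      (2 * Complex.I) •
        ((2 * Complex.I)⁻¹ •
          (Sii * (η - Sii)⁻¹ - (Sii * (η - Sii)⁻¹)ᴴ)) := by
  have hSei : Seiᴴ * Sei = (η - Sii)ᴴ * (η - Sii) + (η - Sii)ᴴ * Sii + Siiᴴ * (η - Sii) := by
    rw [eq_sub_of_add_eq' hiso, ← hη.2]
    exact star_mul_self_sub_star_mul_self η Sii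
  rw [smul_smul, mul_inv_cancel₀ (by simp), one_smul, ← conjTranspose_sub,
    Matrix.mul_assoc _ Seiᴴ, hSei, conjTranspose_inv_mul_mul_inv hInv, two_smul]
  abel
end

section
/- Stratonovich–Itô conversion for the Hamiltonian: let E ∈ ℂ^{n×n} Hermitian with I + (i/2)E invertible, F ∈ ℂ^{n×1} (or n×m), K = K† , and define S = (I-(i/2)E)(I+(i/2)E)^{-1}, L = -i(I+(i/2)E)^{-1}F. If -(1/2)L†L - iH = -iK - (i/2)F†L, then H = K + (1/2)·Im{F†(I+(i/2)E)^{-1}F} and H is Hermitian, where Im{M} = (M - M†)/(2i). -/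
/-!
Write `A = 1 + (i/2)E`. Hermiticity of `E` gives `A + A† = 2`, hence
`(A⁻¹)† A⁻¹ = ½ (A⁻¹ + (A⁻¹)†)`. Consequently `L†L = ½ (M + M†)` for `M = F†A⁻¹F`, while
`F†L = -iM`; substituting both into the defining equation leaves `H = K + ½ Im M`, and
`Im M` is Hermitian.
-/

open Matrix

open Complex ComplexStarModule in
theorem isSelfAdjoint_two_mul_I_inv_smul_sub_star {V : Type*} [AddCommGroup V] [Module ℂ V]
    [StarAddMonoid V] [StarModule ℂ V] (a : V) :
    IsSelfAdjoint ((2 * I)⁻¹ • (a - star a)) := by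
  have hIm : (ℑ a : V) = (2 * I)⁻¹ • (a - star a) := by
    rw [imaginaryPart_apply_coe, ← smul_one_smul ℂ (2 : ℝ)⁻¹, smul_smul]
    simp [inv_I]
  exact hIm ▸ (ℑ a).2

open Complex in
theorem eq_add_half_smul_two_mul_I_inv_smul_sub_star {V : Type*} [AddCommGroup V] [Module ℂ V]
    [Star V] {H K M P : V} (hP : (2 : ℂ) • P = M + star M)
    (h : -((1 / 2 : ℂ) • P) - I • H = -(I • K) - (I / 2) • -(I • M)) :
    H = K + (1 / 2 : ℂ) • ((2 * I)⁻¹ • (M - star M)) := by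
  rw [mul_inv, inv_I]
  linear_combination (norm := skip) I • h + (I / 4) • hP
  match_scalars <;> ring_nf <;> simp [I_sq]

theorem conjTranspose_one_add_I_div_two_smul {ι : Type*} [Fintype ι] [DecidableEq ι]
    {E : Matrix ι ι ℂ} (hE : Eᴴ = E) :
    (1 + (Complex.I / 2) • E)ᴴ = 1 - (Complex.I / 2) • E := by
  rw [conjTranspose_add, conjTranspose_smul, hE, conjTranspose_one, sub_eq_add_neg, ← neg_smul]
  congr 2
  simp [neg_div]

theorem conjTranspose_nonsing_inv_mul_add_mul_nonsing_inv {ι R : Type*} [Fintype ι]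
    [DecidableEq ι] [CommRing R] [StarRing R] {A : Matrix ι ι R} (hA : IsUnit A.det) :
    A⁻¹ᴴ * (A + Aᴴ) * A⁻¹ = A⁻¹ + A⁻¹ᴴ := by
  have hAH : IsUnit Aᴴ.det := by rw [det_conjTranspose]; exact hA.star
  rw [Matrix.mul_add, Matrix.add_mul, Matrix.mul_assoc, mul_nonsing_inv A hA, Matrix.mul_one,
    conjTranspose_nonsing_inv, nonsing_inv_mul _ hAH, Matrix.one_mul, add_comm]

theorem two_smul_conjTranspose_mul_self_nonsing_inv_mul {ι κ R : Type*} [Fintype ι]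
    [DecidableEq ι] [CommRing R] [StarRing R] {A : Matrix ι ι R} (hA : IsUnit A.det)
    (h2 : A + Aᴴ = (2 : R) • 1) (F : Matrix ι κ R) :
    (2 : R) • ((A⁻¹ * F)ᴴ * (A⁻¹ * F)) = Fᴴ * A⁻¹ * F + (Fᴴ * A⁻¹ * F)ᴴ := by
  have hmid := conjTranspose_nonsing_inv_mul_add_mul_nonsing_inv hA
  rw [h2, Matrix.mul_smul, Matrix.mul_one, Matrix.smul_mul] at hmid
  calc (2 : R) • ((A⁻¹ * F)ᴴ * (A⁻¹ * F))
      = Fᴴ * ((2 : R) • (A⁻¹ᴴ * A⁻¹)) * F := by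
        simp only [conjTranspose_mul, Matrix.mul_smul, Matrix.smul_mul, Matrix.mul_assoc]
    _ = Fᴴ * A⁻¹ * F + (Fᴴ * A⁻¹ * F)ᴴ := by
        rw [hmid, Matrix.mul_add, Matrix.add_mul]
        simp only [conjTranspose_mul, conjTranspose_conjTranspose, Matrix.mul_assoc]

theorem stratonovich_ito_hamiltonian {n m : ℕ}
    (E : Matrix (Fin n) (Fin n) ℂ) (hE : Eᴴ = E)
    (hInv : IsUnit ((1 : Matrix (Fin n) (Fin n) ℂ) + (Complex.I / 2) • E))
    (F : Matrix (Fin n) (Fin m) ℂ)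
    (K H : Matrix (Fin m) (Fin m) ℂ) (hK : Kᴴ = K)
    (L : Matrix (Fin n) (Fin m) ℂ)
    (hL : L = -(Complex.I • (((1 : Matrix (Fin n) (Fin n) ℂ) + (Complex.I / 2) • E)⁻¹ * F)))
    (hEq : -((1 / 2 : ℂ) • (Lᴴ * L)) - Complex.I • H =
        -(Complex.I • K) - (Complex.I / 2) • (Fᴴ * L)) :
    H = K + (1 / 2 : ℂ) •
        ((2 * Complex.I)⁻¹ •
          (Fᴴ * ((1 : Matrix (Fin n) (Fin n) ℂ) + (Complex.I / 2) • E)⁻¹ * F -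
            (Fᴴ * ((1 : Matrix (Fin n) (Fin n) ℂ) + (Complex.I / 2) • E)⁻¹ * F)ᴴ)) ∧
      Hᴴ = H := by
  set A : Matrix (Fin n) (Fin n) ℂ := 1 + (Complex.I / 2) • E
  have hA2 : A + Aᴴ = (2 : ℂ) • 1 := by
    rw [conjTranspose_one_add_I_div_two_smul hE, add_add_sub_cancel, two_smul]
  have hLL : (2 : ℂ) • (Lᴴ * L) = Fᴴ * A⁻¹ * F + (Fᴴ * A⁻¹ * F)ᴴ := by
    rw [← two_smul_conjTranspose_mul_self_nonsing_inv_mul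
      ((isUnit_iff_isUnit_det A).mp hInv) hA2 F, hL]
    simp [smul_smul]
  have hFL : Fᴴ * L = -(Complex.I • (Fᴴ * A⁻¹ * F)) := by
    rw [hL, Matrix.mul_neg, Matrix.mul_smul, Matrix.mul_assoc]
  have hH := eq_add_half_smul_two_mul_I_inv_smul_sub_star hLL (hFL ▸ hEq)
  refine ⟨hH, ?_⟩
  have hHalf : IsSelfAdjoint (1 / 2 : ℂ) := by simp [IsSelfAdjoint]
  exact hH ▸ IsSelfAdjoint.add (hK : IsSelfAdjoint K)
    (hHalf.smul (isSelfAdjoint_two_mul_I_inv_smul_sub_star _))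
end
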